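/- Equivalence of restricted and unrestricted vertex-arrival Ranking: For any fixed permutation σ : V → {1,…,|V|}, the matching produced by the unrestricted Ranking (each arriving vertex matches its lowest-σ-ranked unmatched neighbor, arrived or not) equals the matching produced by restricted Ranking (each arriving vertex matches its lowest-σ-ranked unmatched neighbor among those that have already arrived). -/

import Mathlib

open List

variable {V : Type*}

/-- Whether vertex `u` is an endpoint of some edge in the partial matching `M`. -/
def isMatchedL [DecidableEq V] (M : List (V × V)) (u : V) : Bool :=
  M.any (fun p => p.1 = u || p.2 = u)

/-- One step of the Ranking algorithm: process vertex `u`.  If `u` is not forbidden and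
not yet matched, it is matched to the first available neighbor in the order `order`. -/
def rankingStepF [DecidableEq V] (G : SimpleGraph V) [DecidableRel G.Adj]
    (forbidden : List V) (order : List V) (M : List (V × V)) (u : V) : List (V × V) :=
  if u ∈ forbidden ∨ isMatchedL M u = true then M
  else
    match order.find? (fun w =>
        decide (G.Adj u w) && !(decide (w ∈ forbidden)) && !isMatchedL M w) with
    | some w => (u, w) :: M
    | none => M

/-- Partial matching of Ranking after processing the first `t` vertices of `order`. -/
def rankingPartialF [DecidableEq V] (G : SimpleGraph V) [DecidableRel G.Adj]
    (forbidden order : List V) (t : ℕ) : List (V × V) :=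
  (order.take t).foldl (rankingStepF G forbidden order) []

/-- The matching output by Ranking on the permutation given by the list `order`. -/
def rankingList [DecidableEq V] (G : SimpleGraph V) [DecidableRel G.Adj]
    (order : List V) : List (V × V) :=
  order.foldl (rankingStepF G [] order) []

/-- `u` is matched to `v` in the output of Ranking on `order`. -/
def matchedTo [DecidableEq V] (G : SimpleGraph V) [DecidableRel G.Adj]
    (order : List V) (u v : V) : Prop :=
  (u, v) ∈ rankingList G order ∨ (v, u) ∈ rankingList G order

/-- `u` is matched in the output of Ranking on `order`. -/
def isMatchedInRanking [DecidableEq V] (G : SimpleGraph V) [DecidableRel G.Adj]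
    (order : List V) (u : V) : Prop :=
  ∃ v, matchedTo G order u v

/-- The set of (unordered) edges of a list of matched pairs. -/
def matchEdges (L : List (V × V)) : Set (Sym2 V) := {e | ∃ p ∈ L, e = s(p.1, p.2)}

/-- Restricted Ranking: vertices arrive in list order; an arriving vertex is matched to
its first unmatched neighbor among the vertices that have already arrived. -/
def rankingRestrictedAux [DecidableEq V] (G : SimpleGraph V) [DecidableRel G.Adj] :
    List V → List V → List (V × V) → List (V × V)
  | _, [], M => M
  | arrived, u :: rest, M =>
    let arrived' := arrived ++ [u]
    let M' :=
      if isMatchedL M u = true then M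
      else
        match arrived'.find? (fun w => decide (G.Adj u w) && !isMatchedL M w) with
        | some w => (u, w) :: M
        | none => M
    rankingRestrictedAux G arrived' rest M'

def rankingRestricted [DecidableEq V] (G : SimpleGraph V) [DecidableRel G.Adj]
    (order : List V) : List (V × V) :=
  rankingRestrictedAux G [] order []

/-!
Let `F` be the matching output by unrestricted Ranking. Invariant: once the vertices of a prefix
`A` of the order have arrived, restricted Ranking has matched exactly the edges of `F` inside `A`.
When `v` arrives, consider a neighbour `b ∈ A` that is free in the restricted run and arrived while
`v` was still free in the unrestricted run. There `b` took `v` or a vertex preceding `v`; in the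
latter case that edge of `F` lies inside `A`, contradicting that `b` is free. So `b` is the
`F`-partner of `v`. Since `v` gets its `F`-edge only when its partner arrives, this applies to
every candidate scanned before that partner; hence restricted Ranking matches `v` to its
`F`-partner if the partner has arrived, and leaves `v` free otherwise.
-/

namespace List

variable {α : Type*} [DecidableEq α] {l : List α} {p : α → Bool} {a b : α}

theorem idxOf_le_of_find?_eq_some (h : l.find? p = some a) (hb : b ∈ l) (hpb : p b) :
    l.idxOf a ≤ l.idxOf b := by
  obtain ⟨-, as, bs, rfl, has⟩ := find?_eq_some_iff_append.1 h
  have hbas : b ∉ as := fun h' => by simpa [hpb] using has b h'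
  grind [idxOf_append_of_notMem]

theorem find?_eq_some_of_idxOf (ha : a ∈ l) (hpa : p a)
    (hmin : ∀ b ∈ l, l.idxOf b < l.idxOf a → p b = false) : l.find? p = some a := by
  induction l with
  | nil => simp at ha
  | cons c l ih =>
    by_cases hpc : p c
    · rw [find?_cons_of_pos hpc]
      by_contra hac
      have := hmin c mem_cons_self
      grind
    · rw [find?_cons_of_neg hpc]
      have hac : a ≠ c := by rintro rfl; exact hpc hpa
      refine ih (by grind) fun b hb hlt => ?_
      by_cases hbc : b = c
      · simpa [hbc] using hpc
      · exact hmin b (mem_cons_of_mem _ hb) (by grind)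

end List

theorem mk_mem_matchEdges_iff {M : List (V × V)} {x y : V} :
    s(x, y) ∈ matchEdges M ↔ (x, y) ∈ M ∨ (y, x) ∈ M := by
  simp only [matchEdges, Set.mem_ofPred_eq]
  constructor
  · rintro ⟨p, hp, he⟩
    rcases Sym2.eq_iff.1 he with ⟨rfl, rfl⟩ | ⟨rfl, rfl⟩ <;> simp [hp]
  · rintro (h | h)
    exacts [⟨_, h, rfl⟩, ⟨_, h, Sym2.eq_swap⟩]

theorem matchEdges_cons (p : V × V) (M : List (V × V)) :
    matchEdges (p :: M) = insert s(p.1, p.2) (matchEdges M) := by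
  ext e
  simp [matchEdges, eq_comm]

section Greedy

variable [DecidableEq V]

theorem isMatchedL_eq_true_iff {M : List (V × V)} {u : V} :
    isMatchedL M u = true ↔ ∃ w, s(u, w) ∈ matchEdges M := by
  simp only [isMatchedL, any_eq_true, Bool.or_eq_true, decide_eq_true_eq, mk_mem_matchEdges_iff]
  constructor
  · rintro ⟨⟨x, y⟩, hp, rfl | rfl⟩
    exacts [⟨y, Or.inl hp⟩, ⟨x, Or.inr hp⟩]
  · rintro ⟨w, h | h⟩
    exacts [⟨_, h, Or.inl rfl⟩, ⟨_, h, Or.inr rfl⟩]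

variable (G : SimpleGraph V) [DecidableRel G.Adj]

def greedyStep (cands : List V) (M : List (V × V)) (u : V) : List (V × V) :=
  if isMatchedL M u = true then M
  else
    match cands.find? (fun w => decide (G.Adj u w) && !isMatchedL M w) with
    | some w => (u, w) :: M
    | none => M

theorem rankingStepF_nil (order : List V) : rankingStepF G [] order = greedyStep G order := by
  funext M u
  simp [rankingStepF, greedyStep]

theorem rankingRestrictedAux_cons (arrived rest : List V) (M : List (V × V)) (u : V) :
    rankingRestrictedAux G arrived (u :: rest) M =
      rankingRestrictedAux G (arrived ++ [u]) rest (greedyStep G (arrived ++ [u]) M u) :=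
  rfl

variable {G}

theorem greedyStep_of_find?_eq_none {cands : List V} {M : List (V × V)} {u : V}
    (h : cands.find? (fun w => decide (G.Adj u w) && !isMatchedL M w) = none) :
    greedyStep G cands M u = M := by
  unfold greedyStep; split <;> simp [h]

theorem greedyStep_of_find?_eq_some {cands : List V} {M : List (V × V)} {u w : V}
    (hu : isMatchedL M u = false)
    (h : cands.find? (fun w => decide (G.Adj u w) && !isMatchedL M w) = some w) :
    greedyStep G cands M u = (u, w) :: M := by
  simp [greedyStep, hu, h]

theorem mem_greedyStep {cands : List V} {M : List (V × V)} {u : V} {p : V × V}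
    (hp : p ∈ greedyStep G cands M u) :
    p ∈ M ∨ p.1 = u ∧ p.2 ∈ cands ∧ G.Adj u p.2 := by
  unfold greedyStep at hp
  split at hp
  · exact Or.inl hp
  · split at hp
    · rename_i w hw
      rcases mem_cons.1 hp with rfl | hp
      · have hpw : G.Adj u w ∧ isMatchedL M w = false := by simpa using find?_some hw
        exact Or.inr ⟨rfl, mem_of_find?_eq_some hw, hpw.1⟩
      · exact Or.inl hp
    · exact Or.inl hp

theorem suffix_greedyStep (cands : List V) (M : List (V × V)) (u : V) :
    M <:+ greedyStep G cands M u := by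
  unfold greedyStep
  split
  · exact suffix_refl M
  · split
    · exact suffix_cons _ M
    · exact suffix_refl M

end Greedy

theorem matchEdges_mono {M M' : List (V × V)} (h : M ⊆ M') : matchEdges M ⊆ matchEdges M' :=
  fun _ ⟨p, hp, he⟩ => ⟨p, h hp, he⟩

def IsMatchingEdges (E : Set (Sym2 V)) : Prop :=
  ∀ ⦃x y z⦄, s(x, y) ∈ E → s(x, z) ∈ E → y = z

section Unrestricted

variable [DecidableEq V] {G : SimpleGraph V} [DecidableRel G.Adj]

theorem isMatchingEdges_greedyStep {cands : List V} {M : List (V × V)}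
    (hM : IsMatchingEdges (matchEdges M)) (u : V) :
    IsMatchingEdges (matchEdges (greedyStep G cands M u)) := by
  unfold greedyStep
  split
  · exact hM
  split
  · rename_i _ w hw
    have hwfree : isMatchedL M w = false := (by simpa using find?_some hw : G.Adj u w ∧ _).2
    have hnew : ∀ {x y z}, s(x, y) = s(u, w) → s(x, z) ∉ matchEdges M := by
      intro x y z he hz
      have hx : isMatchedL M x = true := isMatchedL_eq_true_iff.2 ⟨z, hz⟩
      rcases Sym2.eq_iff.1 he with ⟨rfl, -⟩ | ⟨rfl, -⟩ <;> simp_all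
    intro x y z hy hz
    rw [matchEdges_cons, Set.mem_insert_iff] at hy hz
    rcases hy with hy | hy <;> rcases hz with hz | hz
    · exact Sym2.congr_right.1 (hy.trans hz.symm)
    · exact absurd hz (hnew hy)
    · exact absurd hy (hnew hz)
    · exact hM hy hz
  · exact hM

variable (G) (order : List V)

local notation "𝓜" => rankingPartialF G [] order

theorem rankingPartialF_zero : 𝓜 0 = [] := rfl

theorem rankingPartialF_succ (t : ℕ) :
    𝓜 (t + 1) = order[t]?.elim (𝓜 t) (greedyStep G order (𝓜 t)) := by
  unfold rankingPartialF
  rw [take_add_one, foldl_append, rankingStepF_nil]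
  cases order[t]? <;> rfl

theorem rankingPartialF_idxOf_succ {u : V} (hu : u ∈ order) :
    𝓜 (order.idxOf u + 1) = greedyStep G order (𝓜 (order.idxOf u)) u := by
  rw [rankingPartialF_succ, getElem?_idxOf hu]
  rfl

theorem rankingPartialF_of_length_le {t : ℕ} (ht : order.length ≤ t) :
    𝓜 t = rankingList G order := by
  rw [rankingPartialF, take_of_length_le ht, rankingList, rankingStepF_nil]

theorem monotone_matchEdges_rankingPartialF : Monotone fun t => matchEdges (𝓜 t) := by
  refine monotone_nat_of_le_succ fun t => ?_
  simp only [rankingPartialF_succ]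
  cases order[t]?
  · exact le_rfl
  · exact matchEdges_mono (suffix_greedyStep _ _ _).subset

theorem matchEdges_rankingPartialF_subset (t : ℕ) :
    matchEdges (𝓜 t) ⊆ matchEdges (rankingList G order) := by
  rw [← rankingPartialF_of_length_le G order (le_max_right t order.length)]
  exact monotone_matchEdges_rankingPartialF G order (le_max_left _ _)

theorem isMatchingEdges_rankingPartialF (t : ℕ) : IsMatchingEdges (matchEdges (𝓜 t)) := by
  induction t with
  | zero => intro x y z hy; simp [rankingPartialF_zero, matchEdges] at hy
  | succ t ih =>
    rw [rankingPartialF_succ]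
    cases order[t]?
    · exact ih
    · exact isMatchingEdges_greedyStep ih _

theorem mem_rankingPartialF {t : ℕ} {x y : V} (h : (x, y) ∈ 𝓜 t) :
    G.Adj x y ∧ x ∈ order.take t ∧ y ∈ order := by
  induction t with
  | zero => simp [rankingPartialF_zero] at h
  | succ t ih =>
    rw [rankingPartialF_succ, take_add_one] at *
    cases hu : order[t]? with
    | none => simpa [hu] using ih (by simpa [hu] using h)
    | some u =>
      rw [hu] at h
      rcases mem_greedyStep h with h | ⟨rfl, hy, hadj⟩
      · obtain ⟨hadj, hx, hy⟩ := ih h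
        exact ⟨hadj, by simp [hx], hy⟩
      · exact ⟨hadj, by simp, hy⟩

variable {G order}

theorem isMatchingEdges_rankingList : IsMatchingEdges (matchEdges (rankingList G order)) :=
  rankingPartialF_of_length_le G order le_rfl ▸ isMatchingEdges_rankingPartialF G order _

theorem adj_of_mk_mem_matchEdges_rankingList {x y : V}
    (h : s(x, y) ∈ matchEdges (rankingList G order)) : G.Adj x y := by
  rw [← rankingPartialF_of_length_le G order le_rfl, mk_mem_matchEdges_iff] at h
  rcases h with h | h
  exacts [(mem_rankingPartialF G order h).1, (mem_rankingPartialF G order h).1.symm]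

theorem mem_of_mk_mem_matchEdges_rankingList {x y : V}
    (h : s(x, y) ∈ matchEdges (rankingList G order)) : x ∈ order := by
  rw [← rankingPartialF_of_length_le G order le_rfl, mk_mem_matchEdges_iff] at h
  rcases h with h | h
  exacts [mem_of_mem_take (mem_rankingPartialF G order h).2.1, (mem_rankingPartialF G order h).2.2]

theorem idxOf_lt_or_idxOf_lt_of_mk_mem_rankingPartialF {t : ℕ} {x y : V}
    (h : s(x, y) ∈ matchEdges (𝓜 t)) : order.idxOf x < t ∨ order.idxOf y < t := by
  rcases mk_mem_matchEdges_iff.1 h with h | h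
  · have hx := (mem_rankingPartialF G order h).2.1
    exact Or.inl ((mem_take_iff_idxOf_lt (mem_of_mem_take hx)).1 hx)
  · have hy := (mem_rankingPartialF G order h).2.1
    exact Or.inr ((mem_take_iff_idxOf_lt (mem_of_mem_take hy)).1 hy)

theorem exists_partner_idxOf_le {b v : V} (hb : b ∈ order) (hv : v ∈ order)
    (hbv : order.idxOf b ≤ order.idxOf v) (hadj : G.Adj b v)
    (hvfree : isMatchedL (𝓜 (order.idxOf b)) v = false) :
    ∃ c, s(b, c) ∈ matchEdges (𝓜 (order.idxOf b + 1)) ∧ order.idxOf c ≤ order.idxOf v := by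
  cases hbfree : isMatchedL (𝓜 (order.idxOf b)) b with
  | true =>
    obtain ⟨c, hc⟩ := isMatchedL_eq_true_iff.1 hbfree
    have hcb := (idxOf_lt_or_idxOf_lt_of_mk_mem_rankingPartialF hc).resolve_left (lt_irrefl _)
    exact ⟨c, monotone_matchEdges_rankingPartialF G order (Nat.le_succ _) hc, by omega⟩
  | false =>
    cases hfind : order.find? (fun w => decide (G.Adj b w) && !isMatchedL (𝓜 (order.idxOf b)) w)
      with
    | none => simpa [hadj, hvfree] using find?_eq_none.1 hfind v hv
    | some c =>
      refine ⟨c, ?_, idxOf_le_of_find?_eq_some hfind hv (by simp [hadj, hvfree])⟩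
      rw [rankingPartialF_idxOf_succ G order hb, greedyStep_of_find?_eq_some hbfree hfind,
        matchEdges_cons]
      exact Set.mem_insert _ _

theorem isMatchedL_rankingPartialF_eq_false {s : ℕ} {v : V} (hv : s ≤ order.idxOf v)
    (h : ∀ y, s(v, y) ∈ matchEdges (rankingList G order) → s ≤ order.idxOf y) :
    isMatchedL (𝓜 s) v = false := by
  by_contra hfree
  obtain ⟨y, hy⟩ := isMatchedL_eq_true_iff.1 (Bool.not_eq_false _ ▸ hfree)
  have := h y (matchEdges_rankingPartialF_subset G order s hy)
  have := idxOf_lt_or_idxOf_lt_of_mk_mem_rankingPartialF hy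
  omega

end Unrestricted

section MatchingEdges

variable {E : Set (Sym2 V)} {S : Set V} {v a : V}

theorem IsMatchingEdges.inter_sym2_insert_of_mk_mem (hE : IsMatchingEdges E)
    (hloop : s(v, v) ∉ E) (ha : a ∈ S) (hva : s(v, a) ∈ E) :
    E ∩ (insert v S).sym2 = insert s(v, a) (E ∩ S.sym2) := by
  ext e
  induction e using Sym2.ind with | h x y => ?_
  simp only [Set.mem_inter_iff, Set.mk_mem_sym2_iff, Set.mem_insert_iff, Sym2.eq_iff]
  constructor
  · rintro ⟨he, rfl | hx, rfl | hy⟩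
    · exact absurd he hloop
    · exact Or.inl (Or.inl ⟨rfl, hE he hva⟩)
    · exact Or.inl (Or.inr ⟨hE (Sym2.eq_swap ▸ he) hva, rfl⟩)
    · exact Or.inr ⟨he, hx, hy⟩
  · rintro ((⟨rfl, rfl⟩ | ⟨rfl, rfl⟩) | ⟨he, hx, hy⟩)
    · exact ⟨hva, Or.inl rfl, Or.inr ha⟩
    · exact ⟨Sym2.eq_swap ▸ hva, Or.inr ha, Or.inl rfl⟩
    · exact ⟨he, Or.inr hx, Or.inr hy⟩

theorem inter_sym2_insert_of_forall_not_mk_mem (hloop : s(v, v) ∉ E)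
    (h : ∀ a ∈ S, s(v, a) ∉ E) : E ∩ (insert v S).sym2 = E ∩ S.sym2 := by
  ext e
  induction e using Sym2.ind with | h x y => ?_
  simp only [Set.mem_inter_iff, Set.mk_mem_sym2_iff, Set.mem_insert_iff]
  constructor
  · rintro ⟨he, rfl | hx, rfl | hy⟩
    · exact absurd he hloop
    · exact absurd he (h y hy)
    · exact absurd (Sym2.eq_swap ▸ he) (h x hx)
    · exact ⟨he, hx, hy⟩
  · rintro ⟨he, hx, hy⟩
    exact ⟨he, Or.inr hx, Or.inr hy⟩

end MatchingEdges

section Restricted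

variable [DecidableEq V] {G : SimpleGraph V} [DecidableRel G.Adj] {order arrived : List V}
  {v : V} {Mr : List (V × V)}

local notation "𝓕" => matchEdges (rankingList G order)

theorem idxOf_eq_length_of_append_prefix (hnd : order.Nodup) (hpre : arrived ++ [v] <+: order) :
    order.idxOf v = arrived.length := by
  have hv : v ∉ arrived := fun h => by
    simpa using (nodup_append.1 (hpre.sublist.nodup hnd)).2.2 v h v (mem_singleton_self v)
  rw [← hpre.idxOf_eq_of_mem (by simp), idxOf_append_of_notMem hv]
  simp

theorem mk_mem_matchEdges_rankingList_of_free (hnd : order.Nodup)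
    (hpre : arrived ++ [v] <+: order) (hMr : matchEdges Mr = 𝓕 ∩ {x | x ∈ arrived}.sym2)
    {b : V} (hb : b ∈ arrived) (hadj : G.Adj b v)
    (hvfree : isMatchedL (rankingPartialF G [] order (order.idxOf b)) v = false)
    (hbfree : isMatchedL Mr b = false) : s(b, v) ∈ 𝓕 := by
  have hv := idxOf_eq_length_of_append_prefix hnd hpre
  have harr := ((prefix_append arrived [v]).trans hpre).mem_iff_idxOf_lt_length
  have hbv : order.idxOf b ≤ order.idxOf v := by have := (harr b).1 hb; omega
  obtain ⟨c, hc, hcv⟩ := exists_partner_idxOf_le (hpre.subset (mem_append_left _ hb))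
    (hpre.subset (by simp)) hbv hadj hvfree
  have hcF := matchEdges_rankingPartialF_subset G order _ hc
  rcases hcv.lt_or_eq with hcv | hcv
  · have hc : c ∈ arrived := (harr c).2 (by omega)
    have hbMr : isMatchedL Mr b = true :=
      isMatchedL_eq_true_iff.2 ⟨c, hMr ▸ ⟨hcF, hb, hc⟩⟩
    simp [hbMr] at hbfree
  · rwa [← (idxOf_inj (mem_of_mk_mem_matchEdges_rankingList (Sym2.eq_swap ▸ hcF))).1 hcv]

theorem greedyStep_eq_cons_of_mk_mem (hnd : order.Nodup) (hpre : arrived ++ [v] <+: order)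
    (hMr : matchEdges Mr = 𝓕 ∩ {x | x ∈ arrived}.sym2) {a : V} (ha : a ∈ arrived)
    (hva : s(v, a) ∈ 𝓕) : greedyStep G (arrived ++ [v]) Mr v = (v, a) :: Mr := by
  have hv := idxOf_eq_length_of_append_prefix hnd hpre
  have harr := ((prefix_append arrived [v]).trans hpre).mem_iff_idxOf_lt_length
  have hvarr : v ∉ arrived := fun h => by have := (harr v).1 h; omega
  have hF : IsMatchingEdges 𝓕 := isMatchingEdges_rankingList
  have hvfreeMr : isMatchedL Mr v = false := by
    by_contra h
    obtain ⟨y, hy⟩ := isMatchedL_eq_true_iff.1 (Bool.not_eq_false _ ▸ h)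
    exact hvarr (hMr ▸ hy).2.1
  have hafreeMr : isMatchedL Mr a = false := by
    by_contra h
    obtain ⟨y, hy⟩ := isMatchedL_eq_true_iff.1 (Bool.not_eq_false _ ▸ h)
    rw [hMr] at hy
    exact hvarr (hF (Sym2.eq_swap ▸ hva) hy.1 ▸ hy.2.2)
  refine greedyStep_of_find?_eq_some hvfreeMr (find?_eq_some_of_idxOf (mem_append_left _ ha)
    (by simp [(adj_of_mk_mem_matchEdges_rankingList hva), hafreeMr]) fun b hb hlt => ?_)
  by_contra hpb
  simp only [Bool.not_eq_false, Bool.and_eq_true, decide_eq_true_eq, Bool.not_eq_true'] at hpb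
  have hb : b ∈ arrived := by
    simpa [(G.ne_of_adj hpb.1).symm] using hb
  rw [hpre.idxOf_eq_of_mem (mem_append_left _ hb), hpre.idxOf_eq_of_mem (mem_append_left _ ha)]
    at hlt
  have hvfree : isMatchedL (rankingPartialF G [] order (order.idxOf b)) v = false :=
    isMatchedL_rankingPartialF_eq_false (by have := (harr b).1 hb; omega)
      fun y hy => hF hy hva ▸ hlt.le
  have hbv := mk_mem_matchEdges_rankingList_of_free hnd hpre hMr hb hpb.1.symm hvfree hpb.2
  exact (hF (Sym2.eq_swap ▸ hbv) hva ▸ hlt).false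

theorem greedyStep_eq_self_of_forall_not_mk_mem (hnd : order.Nodup)
    (hpre : arrived ++ [v] <+: order) (hMr : matchEdges Mr = 𝓕 ∩ {x | x ∈ arrived}.sym2)
    (h : ∀ a ∈ arrived, s(v, a) ∉ 𝓕) : greedyStep G (arrived ++ [v]) Mr v = Mr := by
  have hv := idxOf_eq_length_of_append_prefix hnd hpre
  have harr := ((prefix_append arrived [v]).trans hpre).mem_iff_idxOf_lt_length
  refine greedyStep_of_find?_eq_none (find?_eq_none.2 fun b hb hpb => ?_)
  simp only [Bool.and_eq_true, decide_eq_true_eq, Bool.not_eq_true'] at hpb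
  have hb : b ∈ arrived := by
    simpa [(G.ne_of_adj hpb.1).symm] using hb
  have hbt := (harr b).1 hb
  have hvfree : isMatchedL (rankingPartialF G [] order (order.idxOf b)) v = false :=
    isMatchedL_rankingPartialF_eq_false (by omega) fun y hy => by
      by_contra hyb
      exact h y ((harr y).2 (by omega)) hy
  exact h b hb (Sym2.eq_swap ▸
    mk_mem_matchEdges_rankingList_of_free hnd hpre hMr hb hpb.1.symm hvfree hpb.2)

theorem matchEdges_greedyStep_append (hnd : order.Nodup) (hpre : arrived ++ [v] <+: order)
    (hMr : matchEdges Mr = 𝓕 ∩ {x | x ∈ arrived}.sym2) :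
    matchEdges (greedyStep G (arrived ++ [v]) Mr v) = 𝓕 ∩ {x | x ∈ arrived ++ [v]}.sym2 := by
  have hset : {x | x ∈ arrived ++ [v]} = insert v {x | x ∈ arrived} := by
    ext
    simp [or_comm]
  have hloop : s(v, v) ∉ 𝓕 := fun h => G.irrefl (adj_of_mk_mem_matchEdges_rankingList h)
  rw [hset]
  by_cases h : ∃ a ∈ arrived, s(v, a) ∈ 𝓕
  · obtain ⟨a, ha, hva⟩ := h
    rw [greedyStep_eq_cons_of_mk_mem hnd hpre hMr ha hva, matchEdges_cons, hMr,
      isMatchingEdges_rankingList.inter_sym2_insert_of_mk_mem hloop ha hva]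
  · push Not at h
    rw [greedyStep_eq_self_of_forall_not_mk_mem hnd hpre hMr h, hMr,
      inter_sym2_insert_of_forall_not_mk_mem (S := {x | x ∈ arrived}) hloop h]

theorem matchEdges_rankingRestrictedAux (hnd : order.Nodup) {rest : List V}
    (horder : arrived ++ rest = order) (hMr : matchEdges Mr = 𝓕 ∩ {x | x ∈ arrived}.sym2) :
    matchEdges (rankingRestrictedAux G arrived rest Mr) = 𝓕 := by
  induction rest generalizing arrived Mr with
  | nil =>
    rw [append_nil] at horder
    subst horder
    refine hMr.trans (Set.inter_eq_left.2 fun e he => ?_)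
    induction e using Sym2.ind with | h x y => ?_
    exact ⟨mem_of_mk_mem_matchEdges_rankingList he,
      mem_of_mk_mem_matchEdges_rankingList (Sym2.eq_swap ▸ he)⟩
  | cons v rest ih =>
    rw [rankingRestrictedAux_cons]
    exact ih (by simpa using horder)
      (matchEdges_greedyStep_append hnd ⟨rest, by simpa using horder⟩ hMr)

end Restricted

theorem stmt19_general {V : Type*} [DecidableEq V] (G : SimpleGraph V) [DecidableRel G.Adj]
    (order : List V) (hnd : order.Nodup) :
    matchEdges (rankingList G order) = matchEdges (rankingRestricted G order) := by
  refine (matchEdges_rankingRestrictedAux (arrived := []) hnd rfl ?_).symm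
  ext e
  simp [matchEdges]

/-- Equivalence of restricted and unrestricted vertex-arrival Ranking: for every fixed
permutation of the vertices, the two algorithms output the same matching. -/
theorem stmt19 {V : Type*} [DecidableEq V] (G : SimpleGraph V) [DecidableRel G.Adj]
    (order : List V) (hnd : order.Nodup) (hall : ∀ v : V, v ∈ order) :
    matchEdges (rankingList G order) = matchEdges (rankingRestricted G order) :=
  stmt19_general G order hnd
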